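/- arXiv:0809.0108 — 7 statements merged into one kernel-verified Lean document; each statement's English description precedes it below -/
import Mathlib

section
/- For every α ∈ (0, π/4), the three-dimensional Lebesgue measure (volume) of the body B_α equals π·tan α·(tan(2α) + (tan α)/3). -/
/-!
Every horizontal slice `z = const`, `|z| ≤ 1`, of `B_α` is a planar annulus with radii
`ℓ + tan α · |z|` and `L`, so by Cavalieri's principle the volume is
`∫_{-1}^{1} π (L² - (ℓ + tan α · |z|)²) dz`. Since `L - ℓ = tan α` and `L + ℓ = tan 2α`, the
integrand is the quadratic `π (tan α tan 2α - tan α (tan 2α - tan α) |z| - tan² α z²)` in `|z|`.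
-/

open Real MeasureTheory Set

/-- The zero-resistance body of revolution `B_α`: for `α ∈ (0, π/4)`, with
`L(α) = (tan 2α + tan α)/2` and `ℓ(α) = (tan 2α − tan α)/2`, it is the set of points
`(x, y, z)` with `|z| ≤ 1` and `ℓ(α) + tan α * |z| ≤ √(x² + y²) ≤ L(α)`. -/
def zeroResistanceBody (α : ℝ) : Set (ℝ × ℝ × ℝ) :=
  {p : ℝ × ℝ × ℝ | |p.2.2| ≤ 1 ∧
    (Real.tan (2 * α) - Real.tan α) / 2 + Real.tan α * |p.2.2| ≤
      Real.sqrt (p.1 ^ 2 + p.2.1 ^ 2) ∧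
    Real.sqrt (p.1 ^ 2 + p.2.1 ^ 2) ≤ (Real.tan (2 * α) + Real.tan α) / 2}

theorem intervalIntegral.integral_quadratic (a b c x y : ℝ) :
    ∫ z in x..y, (a + b * z + c * z ^ 2) =
      (a * y + b / 2 * y ^ 2 + c / 3 * y ^ 3) - (a * x + b / 2 * x ^ 2 + c / 3 * x ^ 3) := by
  have hderiv (z : ℝ) : HasDerivAt (fun z => a * z + b / 2 * z ^ 2 + c / 3 * z ^ 3)
      (a + b * z + c * z ^ 2) z := by
    refine ((((hasDerivAt_id' z).const_mul a).add ((hasDerivAt_pow 2 z).const_mul (b / 2))).add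
      ((hasDerivAt_pow 3 z).const_mul (c / 3))).congr_deriv ?_
    norm_num
    ring
  exact integral_eq_sub_of_hasDerivAt (fun z _ => hderiv z)
    (Continuous.intervalIntegrable (by fun_prop) _ _)

theorem volume_setOf_le_sqrt_le {c R : ℝ} (hc : 0 ≤ c) (hcR : c ≤ R) :
    volume {p : ℝ × ℝ | c ≤ √(p.1 ^ 2 + p.2 ^ 2) ∧ √(p.1 ^ 2 + p.2 ^ 2) ≤ R} =
      ENNReal.ofReal (π * (R ^ 2 - c ^ 2)) := by
  have hnorm : Measurable fun p : ℝ × ℝ => √(p.1 ^ 2 + p.2 ^ 2) := by fun_prop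
  have hmeas : MeasurableSet
      {p : ℝ × ℝ | c ≤ √(p.1 ^ 2 + p.2 ^ 2) ∧ √(p.1 ^ 2 + p.2 ^ 2) ≤ R} :=
    (measurableSet_le measurable_const hnorm).inter (measurableSet_le hnorm measurable_const)
  have hannulus : Complex.measurableEquivRealProd ⁻¹'
      {p : ℝ × ℝ | c ≤ √(p.1 ^ 2 + p.2 ^ 2) ∧ √(p.1 ^ 2 + p.2 ^ 2) ≤ R} =
        Metric.closedBall 0 R \ Metric.ball 0 c := by
    ext z
    simp [Complex.norm_def, Complex.normSq_apply, ← sq, and_comm]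
  rw [← Complex.volume_preserving_equiv_real_prod.measure_preimage hmeas.nullMeasurableSet,
    hannulus, measure_sdiff (Metric.ball_subset_closedBall.trans
      (Metric.closedBall_subset_closedBall hcR)) measurableSet_ball.nullMeasurableSet
      measure_ball_lt_top.ne,
    Complex.volume_closedBall, Complex.volume_ball, ← ENNReal.ofReal_pow (hc.trans hcR),
    ← ENNReal.ofReal_pow hc, ← ENNReal.ofReal_coe_nnreal, NNReal.coe_real_pi,
    ← ENNReal.ofReal_mul (by positivity), ← ENNReal.ofReal_mul (by positivity),
    ← ENNReal.ofReal_sub _ (by positivity)]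
  ring_nf

def solidOfRevolution (s : Set ℝ) (r R : ℝ → ℝ) : Set (ℝ × ℝ × ℝ) :=
  {p | p.2.2 ∈ s ∧ r p.2.2 ≤ √(p.1 ^ 2 + p.2.1 ^ 2) ∧ √(p.1 ^ 2 + p.2.1 ^ 2) ≤ R p.2.2}

theorem volume_solidOfRevolution {s : Set ℝ} {r R : ℝ → ℝ} (hs : MeasurableSet s)
    (hr : Measurable r) (hR : Measurable R) (hr₀ : ∀ z ∈ s, 0 ≤ r z)
    (hrR : ∀ z ∈ s, r z ≤ R z) :
    volume (solidOfRevolution s r R) = ∫⁻ z in s, ENNReal.ofReal (π * (R z ^ 2 - r z ^ 2)) := by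
  have hnorm : Measurable fun p : ℝ × ℝ × ℝ => √(p.1 ^ 2 + p.2.1 ^ 2) := by fun_prop
  have hmeas : MeasurableSet (solidOfRevolution s r R) :=
    (measurable_snd.snd hs).inter ((measurableSet_le (hr.comp (by fun_prop)) hnorm).inter
      (measurableSet_le hnorm (hR.comp (by fun_prop))))
  -- put the axis coordinate first, so that the slices of `Measure.prod_apply` are horizontal
  let e : ℝ × ℝ × ℝ → ℝ × ℝ × ℝ := fun q => (q.2.1, q.2.2, q.1)
  have he : MeasurePreserving e volume volume :=
    (measurePreserving_prodAssoc volume volume volume).comp Measure.measurePreserving_swap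
  rw [← he.measure_preimage hmeas.nullMeasurableSet, Measure.volume_eq_prod,
    Measure.prod_apply (hmeas.preimage he.measurable), ← lintegral_indicator hs]
  refine lintegral_congr fun z => ?_
  by_cases hz : z ∈ s
  · have hslice : Prod.mk z ⁻¹' (e ⁻¹' solidOfRevolution s r R) =
        {w : ℝ × ℝ | r z ≤ √(w.1 ^ 2 + w.2 ^ 2) ∧ √(w.1 ^ 2 + w.2 ^ 2) ≤ R z} := by
      ext w; simp [e, solidOfRevolution, hz]
    rw [hslice, indicator_of_mem hz, volume_setOf_le_sqrt_le (hr₀ z hz) (hrR z hz)]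
  · have hslice : Prod.mk z ⁻¹' (e ⁻¹' solidOfRevolution s r R) = ∅ := by
      ext w; simp [e, solidOfRevolution, hz]
    rw [hslice, indicator_of_notMem hz, measure_empty]

theorem intervalIntegral.integral_comp_abs_symm {f : ℝ → ℝ} (hf : Continuous f) {a : ℝ}
    (ha : 0 ≤ a) : ∫ x in -a..a, f |x| = 2 * ∫ x in 0..a, f x := by
  have hf' : Continuous fun x => f |x| := by fun_prop
  have hpos : ∫ x in 0..a, f |x| = ∫ x in 0..a, f x :=
    intervalIntegral.integral_congr fun x hx => by
      rw [uIcc_of_le ha] at hx; rw [abs_of_nonneg hx.1]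
  have hneg : ∫ x in -a..0, f |x| = ∫ x in 0..a, f |x| := by
    simpa using (intervalIntegral.integral_comp_neg (a := 0) (b := a) fun x => f |x|).symm
  rw [← intervalIntegral.integral_add_adjacent_intervals (b := 0) (hf'.intervalIntegrable _ _)
    (hf'.intervalIntegrable _ _), hneg, hpos]
  ring

theorem integral_pi_mul_sq_sub_sq_add_mul_abs (L ℓ t : ℝ) :
    ∫ z in (-1 : ℝ)..1, π * (L ^ 2 - (ℓ + t * |z|) ^ 2) =
      2 * π * (L ^ 2 - ℓ ^ 2 - ℓ * t - t ^ 2 / 3) :=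
  calc ∫ z in (-1 : ℝ)..1, π * (L ^ 2 - (ℓ + t * |z|) ^ 2)
      = 2 * ∫ z in (0 : ℝ)..1, π * (L ^ 2 - (ℓ + t * z) ^ 2) :=
        intervalIntegral.integral_comp_abs_symm (f := fun z => π * (L ^ 2 - (ℓ + t * z) ^ 2))
          (by fun_prop) zero_le_one
    _ = 2 * ∫ z in (0 : ℝ)..1,
          (π * (L ^ 2 - ℓ ^ 2) + -(2 * π * ℓ * t) * z + -(π * t ^ 2) * z ^ 2) := by
        congr 2 with z; ring
    _ = 2 * π * (L ^ 2 - ℓ ^ 2 - ℓ * t - t ^ 2 / 3) := by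
        rw [intervalIntegral.integral_quadratic]; ring

theorem lintegral_Icc_ofReal_eq_intervalIntegral {f : ℝ → ℝ} {a b : ℝ} (hab : a ≤ b)
    (hf : ContinuousOn f (Icc a b)) (hf₀ : ∀ x ∈ Icc a b, 0 ≤ f x) :
    ∫⁻ x in Icc a b, ENNReal.ofReal (f x) = ENNReal.ofReal (∫ x in a..b, f x) := by
  rw [intervalIntegral.integral_of_le hab, ← integral_Icc_eq_integral_Ioc,
    ofReal_integral_eq_lintegral_ofReal hf.integrableOn_Icc
      (ae_restrict_of_forall_mem measurableSet_Icc hf₀)]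

/-- For every `α ∈ (0, π/4)`, the volume of `B_α` equals `π·tan α·(tan 2α + tan α / 3)`. -/
theorem volume_zeroResistanceBody (α : ℝ) (hα : α ∈ Set.Ioo 0 (π / 4)) :
    volume (zeroResistanceBody α) =
      ENNReal.ofReal (π * Real.tan α * (Real.tan (2 * α) + Real.tan α / 3)) := by
  obtain ⟨hα₀, hα₁⟩ := hα
  have ht : 0 < tan α := tan_pos_of_pos_of_lt_pi_div_two hα₀ (by linarith)
  have htT : tan α < tan (2 * α) :=
    tan_lt_tan_of_nonneg_of_lt_pi_div_two hα₀.le (by linarith) (by linarith)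
  set t := tan α
  set T := tan (2 * α)
  have hbody : zeroResistanceBody α = solidOfRevolution (Icc (-1) 1)
      (fun z => (T - t) / 2 + t * |z|) (fun _ => (T + t) / 2) := by
    ext p; simp [zeroResistanceBody, solidOfRevolution, abs_le, t, T]
  have hr₀ : ∀ z ∈ Icc (-1 : ℝ) 1, 0 ≤ (T - t) / 2 + t * |z| := fun z _ => by
    nlinarith [mul_nonneg ht.le (abs_nonneg z)]
  have hrR : ∀ z ∈ Icc (-1 : ℝ) 1, (T - t) / 2 + t * |z| ≤ (T + t) / 2 := fun z hz => by
    nlinarith [mul_le_mul_of_nonneg_left (abs_le.mpr hz) ht.le]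
  rw [hbody, volume_solidOfRevolution measurableSet_Icc (by fun_prop) measurable_const hr₀ hrR,
    lintegral_Icc_ofReal_eq_intervalIntegral (by norm_num) (by fun_prop) fun z hz =>
      mul_nonneg pi_pos.le (sub_nonneg.2 (pow_le_pow_left₀ (hr₀ z hz) (hrR z hz) 2)),
    integral_pi_mul_sq_sub_sq_add_mul_abs]
  congr 1
  ring
end

section
/- For every α ∈ (0, π/4), the convex hull of B_α is the solid cylinder {(x, y, z) ∈ ℝ³ : |z| ≤ 1 and √(x² + y²) ≤ L(α)}; in particular the volume of the convex hull of B_α equals 2π·L(α)². -/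
open Real MeasureTheory

/-- The solid cylinder of radius `L(α) = (tan 2α + tan α)/2` and height `2` around
the `z`-axis. -/
def solidCylinder (α : ℝ) : Set (ℝ × ℝ × ℝ) :=
  {p : ℝ × ℝ × ℝ | |p.2.2| ≤ 1 ∧
    Real.sqrt (p.1 ^ 2 + p.2.1 ^ 2) ≤ (Real.tan (2 * α) + Real.tan α) / 2}

/-- Triangle inequality for the Euclidean norm on the first two coordinates. -/
lemma sqrt_sq_add_sq_convex (x1 y1 x2 y2 a b : ℝ) (ha : 0 ≤ a) (hb : 0 ≤ b) :
    Real.sqrt ((a * x1 + b * x2) ^ 2 + (a * y1 + b * y2) ^ 2) ≤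
      a * Real.sqrt (x1 ^ 2 + y1 ^ 2) + b * Real.sqrt (x2 ^ 2 + y2 ^ 2) := by
  set s := Real.sqrt (x1 ^ 2 + y1 ^ 2) with hs_def
  set t := Real.sqrt (x2 ^ 2 + y2 ^ 2) with ht_def
  have hs0 : 0 ≤ s := Real.sqrt_nonneg _
  have ht0 : 0 ≤ t := Real.sqrt_nonneg _
  have hs : s ^ 2 = x1 ^ 2 + y1 ^ 2 := Real.sq_sqrt (by positivity)
  have ht : t ^ 2 = x2 ^ 2 + y2 ^ 2 := Real.sq_sqrt (by positivity)
  have hcross : x1 * x2 + y1 * y2 ≤ s * t := by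
    nlinarith [sq_nonneg (x1 * y2 - x2 * y1), mul_nonneg hs0 ht0,
      sq_nonneg (s * t - (x1 * x2 + y1 * y2)), sq_nonneg (s * t + (x1 * x2 + y1 * y2))]
  have hs2 : a ^ 2 * s ^ 2 = a ^ 2 * (x1 ^ 2 + y1 ^ 2) := by rw [hs]
  have ht2 : b ^ 2 * t ^ 2 = b ^ 2 * (x2 ^ 2 + y2 ^ 2) := by rw [ht]
  have h3 : 0 ≤ 2 * a * b * (s * t - (x1 * x2 + y1 * y2)) :=
    mul_nonneg (by positivity) (sub_nonneg.2 hcross)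
  have h2 : (a * x1 + b * x2) ^ 2 + (a * y1 + b * y2) ^ 2 ≤ (a * s + b * t) ^ 2 := by
    nlinarith [hs2, ht2, h3]
  calc Real.sqrt ((a * x1 + b * x2) ^ 2 + (a * y1 + b * y2) ^ 2)
      ≤ Real.sqrt ((a * s + b * t) ^ 2) := Real.sqrt_le_sqrt h2
    _ = a * s + b * t := Real.sqrt_sq (by positivity)

/-- For every `α ∈ (0, π/4)`, the convex hull of `B_α` is the solid cylinder of radius
`L(α)` and height `2`; in particular the volume of the convex hull equals `2π·L(α)²`. -/
theorem convexHull_zeroResistanceBody (α : ℝ) (hα : α ∈ Set.Ioo 0 (π / 4)) :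
    convexHull ℝ (zeroResistanceBody α) = solidCylinder α ∧
    volume (convexHull ℝ (zeroResistanceBody α)) =
      ENNReal.ofReal (2 * π * ((Real.tan (2 * α) + Real.tan α) / 2) ^ 2) := by
  obtain ⟨hα0, hα1⟩ := hα
  set L : ℝ := (Real.tan (2 * α) + Real.tan α) / 2 with hL_def
  have htanα : 0 < Real.tan α :=
    Real.tan_pos_of_pos_of_lt_pi_div_two hα0 (by linarith [Real.pi_pos])
  have htan2α : 0 < Real.tan (2 * α) :=
    Real.tan_pos_of_pos_of_lt_pi_div_two (by linarith) (by linarith)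
  have hL : 0 < L := by rw [hL_def]; linarith
  -- The cylinder is convex
  have hconv : Convex ℝ (solidCylinder α) := by
    intro p hp q hq a b ha hb hab
    obtain ⟨hp1, hp2⟩ := hp
    obtain ⟨hq1, hq2⟩ := hq
    constructor
    · have : |(a • p + b • q).2.2| = |a * p.2.2 + b * q.2.2| := rfl
      rw [this]
      calc |a * p.2.2 + b * q.2.2| ≤ |a * p.2.2| + |b * q.2.2| := abs_add_le _ _
        _ = a * |p.2.2| + b * |q.2.2| := by
            rw [abs_mul, abs_mul, abs_of_nonneg ha, abs_of_nonneg hb]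
        _ ≤ a * 1 + b * 1 := by
            gcongr
        _ = 1 := by linarith
    · have h1 : (a • p + b • q).1 = a * p.1 + b * q.1 := rfl
      have h2 : (a • p + b • q).2.1 = a * p.2.1 + b * q.2.1 := rfl
      rw [h1, h2]
      calc Real.sqrt ((a * p.1 + b * q.1) ^ 2 + (a * p.2.1 + b * q.2.1) ^ 2)
          ≤ a * Real.sqrt (p.1 ^ 2 + p.2.1 ^ 2) + b * Real.sqrt (q.1 ^ 2 + q.2.1 ^ 2) :=
            sqrt_sq_add_sq_convex _ _ _ _ _ _ ha hb
        _ ≤ a * L + b * L := by gcongr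
        _ = L := by rw [← add_mul, hab, one_mul]
  -- B ⊆ cylinder
  have hsub : zeroResistanceBody α ⊆ solidCylinder α := fun p hp => ⟨hp.1, hp.2.2⟩
  -- cylinder ⊆ convexHull B
  have hsup : solidCylinder α ⊆ convexHull ℝ (zeroResistanceBody α) := by
    rintro ⟨x, y, z⟩ ⟨hz, hr⟩
    set r : ℝ := Real.sqrt (x ^ 2 + y ^ 2) with hr_def
    have hr0 : 0 ≤ r := Real.sqrt_nonneg _
    -- the two boundary points
    have hlow : ∀ w : ℝ, |w| ≤ 1 →
        (Real.tan (2 * α) - Real.tan α) / 2 + Real.tan α * |w| ≤ L := by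
      intro w hw
      have : Real.tan α * |w| ≤ Real.tan α * 1 := by
        apply mul_le_mul_of_nonneg_left hw htanα.le
      rw [hL_def]; linarith
    rcases eq_or_lt_of_le hr0 with hr0' | hrpos
    · -- r = 0, so x = y = 0
      have hxy : x ^ 2 + y ^ 2 ≤ 0 := Real.sqrt_eq_zero'.mp hr0'.symm
      have hx : x = 0 := by nlinarith [sq_nonneg x, sq_nonneg y]
      have hy : y = 0 := by nlinarith [sq_nonneg x, sq_nonneg y]
      have hsq : Real.sqrt (L ^ 2 + (0:ℝ) ^ 2) = L := by
        rw [show L ^ 2 + (0:ℝ) ^ 2 = L ^ 2 by ring, Real.sqrt_sq hL.le]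
      have hsq' : Real.sqrt ((-L) ^ 2 + (0:ℝ) ^ 2) = L := by
        rw [show (-L) ^ 2 + (0:ℝ) ^ 2 = L ^ 2 by ring, Real.sqrt_sq hL.le]
      have haB : ((L, 0, z) : ℝ × ℝ × ℝ) ∈ zeroResistanceBody α := by
        refine ⟨hz, ?_, ?_⟩
        · show _ ≤ Real.sqrt (L ^ 2 + (0:ℝ) ^ 2)
          rw [hsq]; exact hlow z hz
        · show Real.sqrt (L ^ 2 + (0:ℝ) ^ 2) ≤ _
          rw [hsq]
      have hbB : ((-L, 0, z) : ℝ × ℝ × ℝ) ∈ zeroResistanceBody α := by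
        refine ⟨hz, ?_, ?_⟩
        · show _ ≤ Real.sqrt ((-L) ^ 2 + (0:ℝ) ^ 2)
          rw [hsq']; exact hlow z hz
        · show Real.sqrt ((-L) ^ 2 + (0:ℝ) ^ 2) ≤ _
          rw [hsq']
      apply segment_subset_convexHull haB hbB
      refine ⟨1/2, 1/2, by norm_num, by norm_num, by norm_num, ?_⟩
      show ((1/2 : ℝ) * L + (1/2 : ℝ) * (-L), (1/2 : ℝ) * 0 + (1/2 : ℝ) * 0,
        (1/2 : ℝ) * z + (1/2 : ℝ) * z) = (x, y, z)
      rw [hx, hy]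
      refine Prod.ext (by norm_num) (Prod.ext (by norm_num) (by ring))
    · -- r > 0
      set c : ℝ := L / r with hc_def
      have hc : 0 < c := div_pos hL hrpos
      have hnorm : ∀ s : ℝ, Real.sqrt ((s * x) ^ 2 + (s * y) ^ 2) = |s| * r := by
        intro s
        rw [show (s * x) ^ 2 + (s * y) ^ 2 = s ^ 2 * (x ^ 2 + y ^ 2) by ring,
          Real.sqrt_mul (sq_nonneg s), Real.sqrt_sq_eq_abs, hr_def]
      have hcr : c * r = L := by
        rw [hc_def]
        field_simp
      have hnc : Real.sqrt ((c * x) ^ 2 + (c * y) ^ 2) = L := by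
        rw [hnorm c, abs_of_pos hc, hcr]
      have hnc' : Real.sqrt ((-c * x) ^ 2 + (-c * y) ^ 2) = L := by
        rw [hnorm (-c), abs_neg, abs_of_pos hc, hcr]
      have haB : ((c * x, c * y, z) : ℝ × ℝ × ℝ) ∈ zeroResistanceBody α := by
        refine ⟨hz, ?_, ?_⟩
        · show _ ≤ Real.sqrt ((c * x) ^ 2 + (c * y) ^ 2)
          rw [hnc]; exact hlow z hz
        · show Real.sqrt ((c * x) ^ 2 + (c * y) ^ 2) ≤ _
          rw [hnc]
      have hbB : ((-c * x, -c * y, z) : ℝ × ℝ × ℝ) ∈ zeroResistanceBody α := by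
        refine ⟨hz, ?_, ?_⟩
        · show _ ≤ Real.sqrt ((-c * x) ^ 2 + (-c * y) ^ 2)
          rw [hnc']; exact hlow z hz
        · show Real.sqrt ((-c * x) ^ 2 + (-c * y) ^ 2) ≤ _
          rw [hnc']
      apply segment_subset_convexHull haB hbB
      have hrL : r ≤ L := hr
      refine ⟨(1 + r / L) / 2, (1 - r / L) / 2, ?_, ?_, by ring, ?_⟩
      · have : 0 ≤ r / L := div_nonneg hr0 hL.le
        linarith
      · have : r / L ≤ 1 := (div_le_one hL).mpr hrL
        linarith
      · show ((1 + r / L) / 2 * (c * x) + (1 - r / L) / 2 * (-c * x),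
          (1 + r / L) / 2 * (c * y) + (1 - r / L) / 2 * (-c * y),
          (1 + r / L) / 2 * z + (1 - r / L) / 2 * z) = (x, y, z)
        have hL' : L ≠ 0 := hL.ne'
        have hr' : r ≠ 0 := hrpos.ne'
        refine Prod.ext ?_ (Prod.ext ?_ ?_) <;> simp only [hc_def] <;> field_simp <;> ring
  have hhull : convexHull ℝ (zeroResistanceBody α) = solidCylinder α := by
    apply le_antisymm
    · exact convexHull_min hsub hconv
    · exact hsup
  refine ⟨hhull, ?_⟩
  rw [hhull]
  -- volume computation
  have hcontsqrt : Continuous fun p : ℝ × ℝ × ℝ => Real.sqrt (p.1 ^ 2 + p.2.1 ^ 2) :=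
    Real.continuous_sqrt.comp ((continuous_fst.pow 2).add ((continuous_snd.fst).pow 2))
  have hmeas : MeasurableSet (solidCylinder α) := by
    have : solidCylinder α = {p : ℝ × ℝ × ℝ | |p.2.2| ≤ 1} ∩
        {p : ℝ × ℝ × ℝ | Real.sqrt (p.1 ^ 2 + p.2.1 ^ 2) ≤ L} := rfl
    rw [this]
    exact ((isClosed_le (continuous_snd.snd.abs) continuous_const).inter
      (isClosed_le hcontsqrt continuous_const)).measurableSet
  have hD : MeasurableSet {v : ℝ × ℝ | Real.sqrt (v.1 ^ 2 + v.2 ^ 2) ≤ L} :=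
    (isClosed_le (Real.continuous_sqrt.comp
      ((continuous_fst.pow 2).add (continuous_snd.pow 2))) continuous_const).measurableSet
  have hpre : (MeasurableEquiv.prodAssoc : (ℝ × ℝ) × ℝ ≃ᵐ ℝ × ℝ × ℝ) ⁻¹' solidCylinder α
      = {v : ℝ × ℝ | Real.sqrt (v.1 ^ 2 + v.2 ^ 2) ≤ L} ×ˢ Set.Icc (-1 : ℝ) 1 := by
    ext ⟨⟨x, y⟩, z⟩
    show ((x, y, z) : ℝ × ℝ × ℝ) ∈ solidCylinder α ↔ _
    rw [Set.mem_prod, Set.mem_Icc, Set.mem_setOf_eq]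
    show (|z| ≤ 1 ∧ Real.sqrt (x ^ 2 + y ^ 2) ≤ L) ↔ _
    rw [abs_le]
    tauto
  have hvol : volume (solidCylinder α) =
      volume {v : ℝ × ℝ | Real.sqrt (v.1 ^ 2 + v.2 ^ 2) ≤ L} * volume (Set.Icc (-1 : ℝ) 1) := by
    rw [← MeasureTheory.volume_preserving_prodAssoc.measure_preimage hmeas.nullMeasurableSet,
      hpre, Measure.volume_eq_prod, Measure.prod_prod]
  -- volume of the disc via ℂ
  have hDpre : Complex.measurableEquivRealProd ⁻¹' {v : ℝ × ℝ | Real.sqrt (v.1 ^ 2 + v.2 ^ 2) ≤ L}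
      = Metric.closedBall (0 : ℂ) L := by
    ext w
    simp only [Set.mem_preimage, Complex.measurableEquivRealProd_apply, Set.mem_setOf_eq,
      Metric.mem_closedBall, Complex.dist_eq, sub_zero]
    rw [Complex.norm_def, Complex.normSq_apply]
    ring_nf
  have hdisc : volume {v : ℝ × ℝ | Real.sqrt (v.1 ^ 2 + v.2 ^ 2) ≤ L} =
      ENNReal.ofReal L ^ 2 * NNReal.pi := by
    rw [← Complex.volume_preserving_equiv_real_prod.measure_preimage hD.nullMeasurableSet,
      hDpre, Complex.volume_closedBall]
  rw [hvol, hdisc, Real.volume_Icc]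
  rw [show (1 : ℝ) - (-1) = 2 by norm_num]
  rw [← ENNReal.ofReal_pow hL.le, ← NNReal.coe_real_pi, ENNReal.ofReal_coe_nnreal.symm,
    ← ENNReal.ofReal_mul (by positivity), ← ENNReal.ofReal_mul (by positivity)]
  congr 1
  rw [NNReal.coe_real_pi]
  ring
end

section
/- For every α ∈ (0, π/4), one has 0 < r(α) < 1. (In fact sin((2·⌊π/(4α)⌋ + 1)·α) ≥ cos α > sin α > 0 for such α.) -/
open Real

/-- `r(α) = sin α / sin((2·⌊π/(4α)⌋ + 1)·α)`: the ratio `|CC'|/|BB'|` in the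
construction of a zero-resistance body of revolution from two isosceles trapezia
with base angle `π/2 − α`. -/
noncomputable def rRatio (α : ℝ) : ℝ :=
  Real.sin α / Real.sin (((2 * ⌊π / (4 * α)⌋ + 1 : ℤ) : ℝ) * α)

/-- For every `α ∈ (0, π/4)`, one has `0 < r(α) < 1`; in fact
`sin((2·⌊π/(4α)⌋ + 1)·α) ≥ cos α > sin α > 0` for such `α`. -/
theorem rRatio_pos_lt_one (α : ℝ) (hα : α ∈ Set.Ioo 0 (π / 4)) :
    (0 < rRatio α ∧ rRatio α < 1) ∧
    Real.cos α ≤ Real.sin (((2 * ⌊π / (4 * α)⌋ + 1 : ℤ) : ℝ) * α) ∧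
    Real.sin α < Real.cos α ∧ 0 < Real.sin α := by
  obtain ⟨hα0, hα4⟩ := hα
  have hπ := Real.pi_pos
  set n : ℤ := ⌊π / (4 * α)⌋ with hn
  have h4α : 0 < 4 * α := by linarith
  have hfl : (n : ℝ) ≤ π / (4 * α) := Int.floor_le _
  have hfu : π / (4 * α) < (n : ℝ) + 1 := Int.lt_floor_add_one _
  have h1 : (n : ℝ) * (4 * α) ≤ π := (le_div_iff₀ h4α).mp hfl
  have h2 : π < ((n : ℝ) + 1) * (4 * α) := (div_lt_iff₀ h4α).mp hfu
  set θ : ℝ := ((2 * n + 1 : ℤ) : ℝ) * α with hθ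
  have hθval : θ = (2 * (n : ℝ) + 1) * α := by push_cast [hθ]; ring
  have hθu : θ ≤ π / 2 + α := by rw [hθval]; nlinarith
  have hθl : π / 2 - α < θ := by rw [hθval]; nlinarith
  -- cos α ≤ sin θ
  have habs : |π / 2 - θ| ≤ α := abs_le.mpr ⟨by linarith, by linarith⟩
  have hcs : Real.cos α ≤ Real.sin θ := by
    rw [← Real.cos_pi_div_two_sub θ, ← Real.cos_abs (π / 2 - θ)]
    exact Real.cos_le_cos_of_nonneg_of_le_pi (abs_nonneg _) (by linarith) habs
  have hsin_cos : Real.sin α < Real.cos α := by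
    rw [← Real.sin_pi_div_two_sub α]
    exact Real.sin_lt_sin_of_lt_of_le_pi_div_two (by linarith) (by linarith) (by linarith)
  have hsinpos : 0 < Real.sin α := Real.sin_pos_of_pos_of_lt_pi hα0 (by linarith)
  have hcospos : 0 < Real.cos α := lt_trans hsinpos hsin_cos
  have hsθ : 0 < Real.sin θ := lt_of_lt_of_le hcospos hcs
  refine ⟨⟨div_pos hsinpos hsθ, ?_⟩, hcs, hsin_cos, hsinpos⟩
  rw [rRatio, div_lt_one hsθ]
  calc Real.sin α < Real.cos α := hsin_cos
    _ ≤ _ := hcs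
end

section
/- The limit of r(α) as α → 0⁺ equals 0. -/
open Real Topology Filter

lemma cos_le_sin_arg {α : ℝ} (h0 : 0 < α) (h4 : α < π / 4) :
    Real.cos α ≤ Real.sin (((2 * ⌊π / (4 * α)⌋ + 1 : ℤ) : ℝ) * α) := by
  set n : ℤ := ⌊π / (4 * α)⌋ with hn
  have h1 : (n : ℝ) ≤ π / (4 * α) := Int.floor_le _
  have h2 : π / (4 * α) < (n : ℝ) + 1 := Int.lt_floor_add_one _
  have h4α : 0 < 4 * α := by linarith
  have h1' : (n : ℝ) * (4 * α) ≤ π := by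
    rw [← le_div_iff₀ h4α]; exact h1
  have h2' : π < ((n : ℝ) + 1) * (4 * α) := by
    rw [← div_lt_iff₀ h4α]; exact h2
  have hθ : ((2 * n + 1 : ℤ) : ℝ) * α = (2 * (n : ℝ) + 1) * α := by push_cast; ring
  rw [hθ]
  have hub : (2 * (n : ℝ) + 1) * α ≤ π / 2 + α := by nlinarith
  have hlb : π / 2 - α ≤ (2 * (n : ℝ) + 1) * α := by nlinarith
  have key : Real.sin ((2 * (n : ℝ) + 1) * α) = Real.cos (π / 2 - (2 * (n : ℝ) + 1) * α) :=
    (Real.cos_pi_div_two_sub _).symm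
  rw [key]
  nth_rewrite 2 [← Real.cos_abs]
  refine Real.cos_le_cos_of_nonneg_of_le_pi (abs_nonneg _) ?_ ?_
  · linarith [Real.pi_gt_three]
  · rw [abs_le]; constructor <;> linarith

/-- The limit of `r(α)` as `α → 0⁺` equals `0`. -/
theorem tendsto_rRatio_zero :
    Tendsto rRatio (𝓝[>] (0 : ℝ)) (𝓝 0) := by
  have hmem : Set.Ioo (0 : ℝ) (π / 4) ∈ 𝓝[>] (0 : ℝ) :=
    Ioo_mem_nhdsGT_of_mem ⟨le_refl _, by positivity⟩
  have hbound : ∀ α ∈ Set.Ioo (0 : ℝ) (π / 4),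
      0 ≤ rRatio α ∧ rRatio α ≤ Real.sin α / Real.cos α := by
    intro α hα
    obtain ⟨h0, h4⟩ := hα
    have hcos : 0 < Real.cos α := Real.cos_pos_of_mem_Ioo
      ⟨by linarith [Real.pi_pos], by linarith [Real.pi_gt_three]⟩
    have hkey := cos_le_sin_arg h0 h4
    have hsinθ : 0 < Real.sin (((2 * ⌊π / (4 * α)⌋ + 1 : ℤ) : ℝ) * α) :=
      lt_of_lt_of_le hcos hkey
    have hsinα : 0 ≤ Real.sin α := Real.sin_nonneg_of_nonneg_of_le_pi h0.le
      (by linarith [Real.pi_gt_three])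
    refine ⟨div_nonneg hsinα hsinθ.le, ?_⟩
    exact div_le_div_of_nonneg_left hsinα hcos hkey
  refine squeeze_zero' (Filter.eventually_of_mem hmem fun α hα => (hbound α hα).1)
    (Filter.eventually_of_mem hmem fun α hα => (hbound α hα).2) ?_
  have h : Tendsto (fun α => Real.sin α / Real.cos α) (𝓝 (0 : ℝ))
      (𝓝 (Real.sin 0 / Real.cos 0)) :=
    (Real.continuous_sin.continuousAt.div Real.continuous_cos.continuousAt (by simp)).tendsto
  simpa using h.mono_left nhdsWithin_le_nhds
end

section
/- The function r is continuous on the open interval (0, π/4); in particular it is continuous at each point α = π/(4k), k ≥ 2 an integer, where the floor ⌊π/(4α)⌋ jumps (because sin((2k+1)·π/(4k)) = sin((2k−1)·π/(4k)) = cos(π/(4k))). -/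
/-!
Writing `x = π/(4α) = ⌊x⌋ + {x}`, the denominator becomes
`sin(π/2 − (2{x} − 1)α) = cos((2{x} − 1)α)`, so `r(α) = g(α, {x})` with
`g(α, u) = sin α / cos((2u − 1)α)`. This `g` is continuous for `|α| < π/2` and `u ∈ [0, 1]`,
and `g(α, 0) = g(α, 1)` because cosine is even; hence the jumps of `{x}` from `1` to `0`
are invisible and `r` is continuous.
-/

open Real Topology Filter

open Set

theorem rRatio_eq_div_cos {α : ℝ} (hα : α ≠ 0) :
    rRatio α = sin α / cos ((2 * Int.fract (π / (4 * α)) - 1) * α) := by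
  have hden : (((2 * ⌊π / (4 * α)⌋ + 1 : ℤ) : ℝ)) * α
      = π / 2 - (2 * Int.fract (π / (4 * α)) - 1) * α := by
    rw [Int.fract]
    push_cast
    field_simp
    ring
  rw [rRatio, hden, sin_pi_div_two_sub]

theorem cos_two_mul_sub_one_mul_pos {u α : ℝ} (hu : u ∈ Icc 0 1) (hα : |α| < π / 2) :
    0 < cos ((2 * u - 1) * α) := by
  have hcoef : |2 * u - 1| ≤ 1 := abs_le.mpr ⟨by linarith [hu.1], by linarith [hu.2]⟩
  have hlt : |(2 * u - 1) * α| < π / 2 := by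
    rw [abs_mul]
    exact (mul_le_of_le_one_left (abs_nonneg α) hcoef).trans_lt hα
  exact cos_pos_of_mem_Ioo (abs_lt.mp hlt)

theorem rRatio_continuousOn_Ioo_pi_div_two : ContinuousOn rRatio (Ioo 0 (π / 2)) := by
  let g : Ioo 0 (π / 2) → ℝ → ℝ := fun α u => sin α / cos ((2 * u - 1) * α)
  have hg : ContinuousOn (Function.uncurry g) (univ ×ˢ Icc 0 1) := by
    refine ContinuousOn.div (by fun_prop) (by fun_prop) ?_
    rintro ⟨α, u⟩ ⟨-, hu⟩
    refine (cos_two_mul_sub_one_mul_pos hu ?_).ne'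
    rw [abs_of_pos α.2.1]
    exact α.2.2
  have hg_zero_one : ∀ α, g α 0 = g α 1 := fun α => by
    norm_num [g]
  have hx : Continuous fun α : Ioo 0 (π / 2) => π / (4 * (α : ℝ)) :=
    continuous_const.div (by fun_prop) fun α => by have := α.2.1; positivity
  rw [continuousOn_iff_continuous_domRestrict]
  convert hg.comp_fract hx hg_zero_one using 1
  funext α
  exact rRatio_eq_div_cos α.2.1.ne'

theorem sin_two_mul_add_one_mul_pi_div_four_mul {k : ℝ} (hk : k ≠ 0) :
    sin ((2 * k + 1) * (π / (4 * k))) = cos (π / (4 * k)) := by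
  rw [show (2 * k + 1) * (π / (4 * k)) = π / (4 * k) + π / 2 by field_simp; ring,
    sin_add_pi_div_two]

theorem sin_two_mul_sub_one_mul_pi_div_four_mul {k : ℝ} (hk : k ≠ 0) :
    sin ((2 * k - 1) * (π / (4 * k))) = cos (π / (4 * k)) := by
  rw [show (2 * k - 1) * (π / (4 * k)) = π / 2 - π / (4 * k) by field_simp; ring,
    sin_pi_div_two_sub]

/-- The function `r` is continuous on the open interval `(0, π/4)`; in particular
it is continuous at each point `α = π/(4k)`, `k ≥ 2` an integer, where the floor
`⌊π/(4α)⌋` jumps (because `sin((2k+1)·π/(4k)) = sin((2k−1)·π/(4k)) = cos(π/(4k))`). -/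
theorem rRatio_continuousOn :
    ContinuousOn rRatio (Set.Ioo 0 (π / 4)) ∧
    ∀ k : ℕ, 2 ≤ k →
      ContinuousWithinAt rRatio (Set.Ioo 0 (π / 4)) (π / (4 * k)) ∧
      Real.sin ((2 * (k : ℝ) + 1) * (π / (4 * k))) = Real.cos (π / (4 * k)) ∧
      Real.sin ((2 * (k : ℝ) - 1) * (π / (4 * k))) = Real.cos (π / (4 * k)) := by
  have hcont : ContinuousOn rRatio (Ioo 0 (π / 4)) :=
    rRatio_continuousOn_Ioo_pi_div_two.mono
      (Ioo_subset_Ioo_right (by linarith [pi_pos]))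
  refine ⟨hcont, fun k hk => ?_⟩
  have hk2 : (2 : ℝ) ≤ k := by exact_mod_cast hk
  have hk0 : (k : ℝ) ≠ 0 := by positivity
  have hmem : π / (4 * k) ∈ Ioo 0 (π / 4) :=
    ⟨by positivity, div_lt_div_of_pos_left pi_pos (by norm_num) (by linarith)⟩
  exact ⟨hcont _ hmem, sin_two_mul_add_one_mul_pi_div_four_mul hk0,
    sin_two_mul_sub_one_mul_pi_div_four_mul hk0⟩
end

section
/- The function r is monotone increasing on (0, π/4): for all α₁, α₂ with 0 < α₁ ≤ α₂ < π/4 one has r(α₁) ≤ r(α₂). -/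
/-!
Since `sin ((2n + 1) α) = sin α · D_n(2α)` with `D_n` the Dirichlet kernel, `r(α) = 1 / D_n(2α)`
on the interval `π / (4(n + 1)) < α ≤ π / (4n)` where `⌊π / (4α)⌋ = n`. There every cosine in
`D_n(2α) = 1 + 2 ∑_{1 ≤ k ≤ n} cos (2kα)` has argument in `[0, π/2]`, so `D_n(2α)` is positive and
decreasing and `r` is increasing. At a breakpoint `α = π / (4(n + 1))` the additional term
`cos (2(n + 1)α) = cos (π/2)` of `D_{n+1}` vanishes, so the two formulas agree there and the
monotone pieces glue together.
-/

open Real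

open Finset Set

/-- The Dirichlet kernel `D_n(t) = sin((n + 1/2) t) / sin(t / 2)`, written as a cosine sum. -/
noncomputable def dirichletKernel (n : ℕ) (t : ℝ) : ℝ :=
  1 + 2 * ∑ k ∈ range n, cos ((k + 1) * t)

lemma dirichletKernel_succ (n : ℕ) (t : ℝ) :
    dirichletKernel (n + 1) t = dirichletKernel n t + 2 * cos ((n + 1) * t) := by
  simp only [dirichletKernel, sum_range_succ]
  ring

lemma sin_two_mul_add_one_mul (n : ℕ) (x : ℝ) :
    sin ((2 * n + 1) * x) = sin x * dirichletKernel n (2 * x) := by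
  induction n with
  | zero => simp [dirichletKernel]
  | succ n ih =>
    have key := sin_sub_sin ((2 * (n + 1 : ℝ) + 1) * x) ((2 * n + 1) * x)
    rw [show ((2 * (n + 1 : ℝ) + 1) * x - (2 * n + 1) * x) / 2 = x by ring,
      show ((2 * (n + 1 : ℝ) + 1) * x + (2 * n + 1) * x) / 2 = (n + 1) * (2 * x) by ring] at key
    rw [dirichletKernel_succ, mul_add, ← ih]
    push_cast
    linarith

lemma antitoneOn_dirichletKernel (n : ℕ) : AntitoneOn (dirichletKernel n) (Icc 0 (π / n)) := by
  intro s hs t ht hst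
  unfold dirichletKernel
  gcongr with k hk
  have hk : (k + 1 : ℝ) ≤ n := by exact_mod_cast mem_range.mp hk
  have hn : (0 : ℝ) < n := by linarith
  have h_le_pi : ∀ u ∈ Icc 0 (π / n), (k + 1) * u ∈ Icc 0 π := fun u hu =>
    ⟨by have := hu.1; positivity, by
      calc (k + 1) * u ≤ n * (π / n) := by gcongr; exacts [hu.1, hu.2]
        _ = π := by field_simp⟩
  exact antitoneOn_cos (h_le_pi s hs) (h_le_pi t ht) (by gcongr)

lemma one_le_dirichletKernel {n : ℕ} {t : ℝ} (ht : t ∈ Icc 0 (π / (2 * n))) :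
    1 ≤ dirichletKernel n t := by
  unfold dirichletKernel
  have hterm : ∀ k ∈ range n, 0 ≤ cos ((k + 1) * t) := by
    intro k hk
    have hk : (k + 1 : ℝ) ≤ n := by exact_mod_cast mem_range.mp hk
    apply cos_nonneg_of_mem_Icc
    constructor
    · have := ht.1; nlinarith [pi_pos]
    · have hn : (0 : ℝ) < n := by linarith
      calc (k + 1) * t ≤ n * (π / (2 * n)) := by gcongr; exacts [ht.1, ht.2]
        _ = π / 2 := by field_simp
  linarith [sum_nonneg hterm]

lemma monotoneOn_inv_dirichletKernel (n : ℕ) :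
    MonotoneOn (fun x => (dirichletKernel n (2 * x))⁻¹) (Icc 0 (π / (4 * n))) := by
  have h2x : ∀ x ∈ Icc 0 (π / (4 * n)), 2 * x ∈ Icc 0 (π / (2 * n)) := fun x hx =>
    ⟨by linarith [hx.1], by
      calc 2 * x ≤ 2 * (π / (4 * n)) := by linarith [hx.2]
        _ = π / (2 * n) := by ring⟩
  have h2x' : ∀ x ∈ Icc 0 (π / (4 * n)), 2 * x ∈ Icc 0 (π / n) := fun x hx =>
    ⟨(h2x x hx).1, (h2x x hx).2.trans <| by
      rcases n.eq_zero_or_pos with rfl | hn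
      · simp
      · gcongr; linarith⟩
  intro x hx y hy hxy
  have hDy := one_le_dirichletKernel (h2x y hy)
  exact inv_anti₀ (by linarith)
    (antitoneOn_dirichletKernel n (h2x' x hx) (h2x' y hy) (by linarith))

lemma rRatio_eq_inv_dirichletKernel {α : ℝ} {n : ℕ} (hfloor : ⌊π / (4 * α)⌋ = n)
    (hsin : sin α ≠ 0) : rRatio α = (dirichletKernel n (2 * α))⁻¹ := by
  rw [rRatio, hfloor, ← div_mul_cancel_left₀ hsin (dirichletKernel n (2 * α)),
    ← sin_two_mul_add_one_mul]
  push_cast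
  rfl

lemma floor_pi_div_four_mul_eq {α : ℝ} {n : ℕ} (hn : 0 < n)
    (hα : α ∈ Ioc (π / (4 * (n + 1))) (π / (4 * n))) : ⌊π / (4 * α)⌋ = n := by
  have hα₀ : 0 < α := lt_trans (by positivity) hα.1
  have hn' : (0 : ℝ) < n := by exact_mod_cast hn
  rw [Int.floor_eq_iff, le_div_iff₀ (by positivity), div_lt_iff₀ (by positivity)]
  have h₁ := hα.1
  have h₂ := hα.2
  rw [div_lt_iff₀ (by positivity)] at h₁
  rw [le_div_iff₀ (by positivity)] at h₂
  push_cast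
  constructor <;> linarith

lemma rRatio_eqOn_inv_dirichletKernel {n : ℕ} (hn : 0 < n) :
    EqOn rRatio (fun x => (dirichletKernel n (2 * x))⁻¹)
      (Icc (π / (4 * (n + 1))) (π / (4 * n))) := by
  intro x hx
  have hn' : (1 : ℝ) ≤ n := by exact_mod_cast hn
  have hx₀ : 0 < x := lt_of_lt_of_le (by positivity) hx.1
  have hsin : sin x ≠ 0 := by
    refine (sin_pos_of_pos_of_lt_pi hx₀ ?_).ne'
    calc x ≤ π / (4 * n) := hx.2
      _ ≤ π / 4 := by gcongr; linarith
      _ < π := by linarith [pi_pos]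
  rcases hx.1.eq_or_lt with hbreak | hlt
  · have hfloor : ⌊π / (4 * x)⌋ = ((n + 1 : ℕ) : ℤ) := by
      rw [← hbreak, show π / (4 * (π / (4 * (n + 1)))) = ((n + 1 : ℕ) : ℝ) by
        push_cast; field_simp]
      exact Int.floor_natCast _
    have hcos : cos ((n + 1) * (2 * x)) = 0 := by
      rw [← hbreak, show (n + 1) * (2 * (π / (4 * (n + 1)))) = π / 2 by field_simp; ring]
      exact cos_pi_div_two
    simp only [rRatio_eq_inv_dirichletKernel hfloor hsin, dirichletKernel_succ]
    rw [hcos, mul_zero, add_zero]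
  · exact rRatio_eq_inv_dirichletKernel (floor_pi_div_four_mul_eq hn ⟨hlt, hx.2⟩) hsin

lemma rRatio_monotoneOn_Icc_succ {n : ℕ} (hn : 0 < n) :
    MonotoneOn rRatio (Icc (π / (4 * (n + 1))) (π / (4 * n))) :=
  ((monotoneOn_inv_dirichletKernel n).mono
    (Icc_subset_Icc_left (by positivity))).congr (rRatio_eqOn_inv_dirichletKernel hn).symm

lemma rRatio_monotoneOn_Icc {n : ℕ} (hn : 0 < n) :
    MonotoneOn rRatio (Icc (π / (4 * n)) (π / 4)) := by
  induction n, hn using Nat.le_induction with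
  | base => simp
  | succ n hn ih =>
    have hle : π / (4 * (n + 1)) ≤ π / (4 * n) := by
      have : (0 : ℝ) < n := by exact_mod_cast hn
      gcongr; linarith
    have hle' : π / (4 * n) ≤ π / 4 := by
      have : (1 : ℝ) ≤ n := by exact_mod_cast hn
      gcongr; linarith
    push_cast
    rw [← Icc_union_Icc_eq_Icc hle hle']
    exact (rRatio_monotoneOn_Icc_succ hn).union_right ih (isGreatest_Icc hle) (isLeast_Icc hle')

/-- The function `r` is monotone increasing on `(0, π/4)`: whenever
`0 < α₁ ≤ α₂ < π/4`, one has `r(α₁) ≤ r(α₂)`. -/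
theorem rRatio_monotoneOn (α₁ α₂ : ℝ) (h₁ : 0 < α₁) (h₁₂ : α₁ ≤ α₂) (h₂ : α₂ < π / 4) :
    rRatio α₁ ≤ rRatio α₂ := by
  obtain ⟨n, hn⟩ := exists_nat_ge (π / (4 * α₁))
  have hbreak : π / (4 * ((n + 1 : ℕ) : ℝ)) ≤ α₁ := by
    rw [div_le_iff₀ (by positivity)]
    rw [div_le_iff₀ (by positivity)] at hn
    push_cast
    nlinarith
  exact rRatio_monotoneOn_Icc n.succ_pos ⟨hbreak, by linarith⟩ ⟨hbreak.trans h₁₂, h₂.le⟩ h₁₂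
end

section
/- Let E be a real inner product space, let v, n ∈ E be unit vectors with ⟨v, n⟩ ≠ 0, and set v₁ = v − 2⟨v, n⟩·n. Let p₁ ∈ E, t > 0, and p₂ = p₁ + t·v₁. If p₂ lies on the line {p₁ + s·v : s ∈ ℝ}, then v₁ = −v and p₁ = p₂ + t·v; in particular, p₁ lies on the forward ray {p₂ + s·v : s ≥ 0}. (Consequently, a billiard particle that makes exactly two reflections and regains its initial velocity cannot have its outgoing line equal to its incoming line without the outgoing ray passing again through the first reflection point; so two reflections do not suffice for an invisible body.) -/
open RealInnerProductSpace

/-- If a billiard particle reflects nontrivially (`⟨v, n⟩ ≠ 0`) off a wall with unit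
normal `n`, acquiring the velocity `v₁ = v − 2⟨v, n⟩n`, travels for time `t > 0` from
`p₁` to `p₂ = p₁ + t·v₁`, and `p₂` lies on the line `{p₁ + s·v}`, then `v₁ = −v` and
`p₁ = p₂ + t·v`; in particular `p₁` lies on the forward ray `{p₂ + s·v : s ≥ 0}`.
(Hence two reflections do not suffice for an invisible body.) -/
theorem two_reflections_not_invisible {E : Type*} [NormedAddCommGroup E]
    [InnerProductSpace ℝ E] (v n : E) (hv : ‖v‖ = 1) (hn : ‖n‖ = 1)
    (hvn : ⟪v, n⟫ ≠ 0) (v₁ : E) (hv₁ : v₁ = v - (2 * ⟪v, n⟫) • n)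
    (p₁ p₂ : E) (t : ℝ) (ht : 0 < t) (hp₂ : p₂ = p₁ + t • v₁)
    (hline : ∃ s : ℝ, p₂ = p₁ + s • v) :
    v₁ = -v ∧ p₁ = p₂ + t • v ∧ ∃ s : ℝ, 0 ≤ s ∧ p₁ = p₂ + s • v := by
  obtain ⟨s, hs⟩ := hline
  have key : t • v₁ = s • v := by
    have h := hp₂.symm.trans hs
    exact add_left_cancel h
  have hnn : ⟪n, n⟫ = (1 : ℝ) := by
    rw [real_inner_self_eq_norm_sq, hn]; norm_num
  have hinner : t * ⟪v, n⟫ - 2 * ⟪v, n⟫ * t = s * ⟪v, n⟫ := by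
    have := congrArg (fun x => ⟪x, n⟫) key
    simp only [hv₁, inner_smul_left, inner_sub_left, RCLike.ofReal_real_eq_id, id,
      real_inner_smul_left, conj_trivial] at this
    rw [hnn] at this
    ring_nf at this ⊢
    linarith
  have hst : s = -t := by
    have : (s + t) * ⟪v, n⟫ = 0 := by ring_nf; linarith [hinner]
    have h0 : s + t = 0 := by
      rcases mul_eq_zero.mp this with h | h
      · exact h
      · exact absurd h hvn
    linarith
  have hv1 : v₁ = -v := by
    have : t • v₁ = t • (-v) := by
      rw [key, hst]; simp
    exact smul_right_injective E ht.ne' this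
  refine ⟨hv1, ?_, t, ht.le, ?_⟩ <;>
  · rw [hp₂, hv1]; simp [smul_neg]
end
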